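/- Let d, m ≥ 1 be integers, T > 0, and let l₁,…,l_m ∈ ℤ^d satisfy l_k = e_k (standard basis) for k = 1,…,d and {l₁,…,l_m} = {−l₁,…,−l_m}. Let a₁,…,a_m, b₁,…,b_d, c be bounded real-valued functions on ℝ × ℝ^d with a_k ≥ 0 everywhere, and let A, B, C₀ bound sup|a_k|, sup|b_k|, sup|c| respectively. There exists h₀ > 0, depending only on d, m, A, B, C₀ and max_k ‖l_k‖, such that the following holds for every h ∈ (0, h₀]. Let Q^o ⊆ (0,T) × hℤ^d be such that for each x the section Q^o_{|x} = {t : (t,x) ∈ Q^o} is open; let Q̂^o be the set of (t₀, x₀) ∈ (0,T] × hℤ^d for which there is a sequence t_n ↑ t₀ with (t_n, x₀) ∈ Q^o; let Q = Q̂^o ∪ {(t, x + h l_k) : (t,x) ∈ Q^o, k = 1,…,m}. Assume h·max(−b_k(t,x), 0) ≤ a_k(t,x) for all k = 1,…,d and all (t,x). Let η be a bounded function on Q^o and let v be a bounded real function on Q such that: (i) for every x, v(·, x) is Borel measurable on Q_{|x}, continuous on Q^o_{|x}, and for every compact interval [s,t] ⊆ Q^o_{|x}: v(t,x) − v(s,x)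 = −∫_s^t [ Σ_{k=1}^m a_k Δ_{h,l_k} v + Σ_{k=1}^d b_k δ_{h,l_k} v − c v + η ](r, x) dr; (ii) for every (t,x) ∈ Q̂^o \ Q^o, v(t,x) = limsup of v(s,x) as s ↑ t with (s,x) ∈ Q^o. Then for all (t,x) ∈ Q^o: v(t,x) ≤ T e^{c̄T} · sup_{Q^o} η⁺ + e^{c̄T} · sup_{Q∖Q^o} v⁺, where c̄ = sup max(−c, 0), a⁺ = max(a,0), and suprema over empty sets are taken to be 0. -/

import Mathlib

/-
Put `U = e^{c̄(t−T)} v − (S_v + (T − t)(S_η + ε))`. On `Q ∖ Q^o` we have `U ≤ 0`; suppose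
`U > 0` somewhere on `Q^o` and let `M > 0` be its supremum over `Q`. At a point of a time
section where `U > M − ρ`, every lattice neighbour has `U ≤ M`, so the spatial part of the
operator applied to `U` is at most a constant times `ρ`: the upwind condition `h(−b_k)⁺ ≤ a_k`
makes all weights nonnegative. For `ρ` small this is beaten by `ε`, and the integral form of the
equation makes `U(·, x)` nondecreasing wherever `U > M − ρ`. Start at a point `(t₁, x)` with
`U > M − ρ/2` and follow its section of `Q^o` forward to the first exit time `β`: `U` stays
above `M − ρ/2`, and the left `limsup` condition passes this on to `(β, x) ∈ Q̂^o ∖ Q^o`, where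
`U ≤ 0`. Letting `ε → 0` gives the bound. Only approximate maximisers along a single time
section are used, so no barrier at spatial infinity is needed and every `h > 0` is allowed.
-/

open scoped BigOperators
open MeasureTheory

noncomputable section

/-- First-order finite difference `δ_{h,l}φ(x) = h⁻¹(φ(x+hl) − φ(x))`. -/
def deltaOp (d : ℕ) (h : ℝ) (l : Fin d → ℝ)
    (φ : (Fin d → ℝ) → ℝ) (x : Fin d → ℝ) : ℝ :=
  (φ (x + h • l) - φ x) / h

/-- Second-order finite difference
`Δ_{h,l}φ(x) = h⁻²(φ(x+hl) − 2φ(x) + φ(x−hl))`. -/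
def DeltaOp (d : ℕ) (h : ℝ) (l : Fin d → ℝ)
    (φ : (Fin d → ℝ) → ℝ) (x : Fin d → ℝ) : ℝ :=
  (φ (x + h • l) - 2 * φ x + φ (x - h • l)) / h ^ 2

open Set Filter Topology

theorem mul_sub_mul_eq_integral_of_eq_sub_integral {θ V F : ℝ → ℝ} {s t : ℝ} (hst : s ≤ t)
    (hθ : ContDiff ℝ 1 θ) (hF : IntervalIntegrable F volume s t)
    (hV : ∀ r ∈ Icc s t, V r = V s - ∫ q in s..r, F q) :
    θ t * V t - θ s * V s = ∫ r in s..t, (deriv θ r * V r - θ r * F r) := by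
  set g : ℝ → ℝ := fun r => V s - ∫ q in s..r, F q
  have hgV : ∀ r ∈ Icc s t, g r = V r := fun r hr => (hV r hr).symm
  have hg : AbsolutelyContinuousOnInterval g s t :=
    (contDiffOn_const (c := V s)).absolutelyContinuousOnInterval.sub
      (hF.absolutelyContinuousOnInterval_intervalIntegral left_mem_uIcc)
  rw [← hgV t ⟨hst, le_rfl⟩, ← hgV s ⟨le_rfl, hst⟩,
    ← hθ.contDiffOn.absolutelyContinuousOnInterval.integral_deriv_mul_eq_sub hg]
  refine intervalIntegral.integral_congr_ae ?_
  filter_upwards [hF.ae_hasDerivAt_integral] with r hF' hr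
  rw [uIoc_of_le hst] at hr
  have hr' : r ∈ uIcc s t := by rw [uIcc_of_le hst]; exact Ioc_subset_Icc_self hr
  rw [((hF' hr' s left_mem_uIcc).const_sub (V s)).deriv, hgV r (Ioc_subset_Icc_self hr)]
  ring

theorem mul_sub_le_mul_sub_of_deriv_le {θ φ V F : ℝ → ℝ} {s t : ℝ} (hst : s ≤ t)
    (hθ : ContDiff ℝ 1 θ) (hφ : ContDiff ℝ 1 φ) (hθst : θ s ≤ θ t) (hφst : φ t ≤ φ s)
    (hVc : ContinuousOn V (Icc s t)) (hV : ∀ r ∈ Icc s t, V r = V s - ∫ q in s..r, F q)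
    (hVs : 0 ≤ V s) (hderiv : ∀ r ∈ Icc s t, deriv φ r ≤ deriv θ r * V r - θ r * F r) :
    θ s * V s - φ s ≤ θ t * V t - φ t := by
  by_cases hF : IntervalIntegrable F volume s t
  · have hφ' : ∫ r in s..t, deriv φ r = φ t - φ s :=
      hφ.contDiffOn.absolutelyContinuousOnInterval.integral_deriv_eq_sub
    have hint : IntervalIntegrable (fun r => deriv θ r * V r - θ r * F r) volume s t := by
      refine (ContinuousOn.intervalIntegrable ?_).sub
        (hF.continuousOn_mul hθ.continuous.continuousOn)
      rw [uIcc_of_le hst]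
      exact (hθ.continuous_deriv le_rfl).continuousOn.mul hVc
    have := intervalIntegral.integral_mono_on hst
      ((hφ.continuous_deriv le_rfl).intervalIntegrable s t) hint hderiv
    rw [hφ', ← mul_sub_mul_eq_integral_of_eq_sub_integral hst hθ hF hV] at this
    linarith
  · -- `∫ F` is the junk value `0`, so `V` is constant
    have hVt : V t = V s := by
      rw [hV t ⟨hst, le_rfl⟩, intervalIntegral.integral_undef hF, sub_zero]
    rw [hVt]
    nlinarith

theorem exists_exit_of_isOpen {S : Set ℝ} (hS : IsOpen S) {a b : ℝ} (ha : a ∈ S) (hb : b ∉ S)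
    (hab : a ≤ b) : ∃ β ∈ Ioc a b, β ∉ S ∧ Ico a β ⊆ S := by
  set E := Icc a b \ S
  have hbdd : BddBelow E := ⟨a, fun r hr => hr.1.1⟩
  have hbE : b ∈ E := ⟨⟨hab, le_rfl⟩, hb⟩
  have hβ : sInf E ∈ E := (isClosed_Icc.sdiff hS).csInf_mem ⟨b, hbE⟩ hbdd
  refine ⟨sInf E, ⟨hβ.1.1.lt_of_ne fun h => hβ.2 (h ▸ ha), csInf_le hbdd hbE⟩, hβ.2,
    fun r hr => ?_⟩
  by_contra hrS
  exact (csInf_le hbdd ⟨⟨hr.1, hr.2.le.trans hβ.1.2⟩, hrS⟩).not_gt hr.2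

theorem le_of_growth_above {f : ℝ → ℝ} {a b c c' : ℝ} (hf : ContinuousOn f (Ico a b))
    (hcc' : c < c') (ha : c' ≤ f a)
    (hgrowth : ∀ s t, a ≤ s → s ≤ t → t < b → (∀ r ∈ Icc s t, c < f r) → f s ≤ f t) :
    ∀ t ∈ Ico a b, c' ≤ f t := by
  intro t ht
  have hsub : Icc a t ⊆ Ico a b := Icc_subset_Ico_right ht.2
  suffices Icc a t ⊆ {r | c' ≤ f r} from this ⟨ht.1, le_rfl⟩
  refine IsClosed.Icc_subset_of_forall_mem_nhdsWithin ?_ ha ?_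
  · rw [inter_comm]
    exact (hf.mono hsub).preimage_isClosed_of_isClosed isClosed_Icc isClosed_Ici
  · rintro x ⟨hx, hxa, hxt⟩
    have hxb : x < b := hxt.trans ht.2
    have hcont : ContinuousWithinAt f (Ici x) x :=
      (hf x ⟨hxa, hxb⟩).mono_of_mem_nhdsWithin
        (mem_of_superset (Ico_mem_nhdsGE hxb) (Ico_subset_Ico_left hxa))
    obtain ⟨u, hxu, hu⟩ := mem_nhdsGE_iff_exists_Ico_subset.1
      (hcont.eventually_const_lt (hcc'.trans_le hx))
    filter_upwards [Ioo_mem_nhdsGT (lt_min (mem_Ioi.1 hxu) hxb)] with y hy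
    have hyu := hy.2.trans_le (min_le_left _ _)
    exact hx.trans (hgrowth x y hxa hy.1.le (hy.2.trans_le (min_le_right _ _))
      fun r hr => hu ⟨hr.1, hr.2.trans_lt hyu⟩)

theorem le_limsup_of_tendsto_of_eventually_le {α : Type*} {L : Filter α} [L.NeBot]
    {f g : α → ℝ} {y : ℝ} (hg : Tendsto g L (𝓝 y)) (hgf : ∀ᶠ r in L, g r ≤ f r)
    (hf : IsBoundedUnder (· ≤ ·) L f) : y ≤ limsup f L := by
  rw [← hg.limsup_eq]
  exact limsup_le_limsup hgf hg.isCoboundedUnder_le hf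

theorem mul_le_max_zero {θ w : ℝ} (h0 : 0 ≤ θ) (h1 : θ ≤ 1) : θ * w ≤ max w 0 := by
  rcases le_total 0 w with hw | hw
  · exact (mul_le_of_le_one_left hw h1).trans (le_max_left _ _)
  · exact (mul_nonpos_of_nonneg_of_nonpos h0 hw).trans (le_max_right _ _)

theorem le_sSup_image_max_zero {X : Type*} {s : Set X} {f : X → ℝ} {M : ℝ}
    (hf : ∀ x ∈ s, |f x| ≤ M) {x : X} (hx : x ∈ s) :
    max (f x) 0 ≤ sSup ((fun y => max (f y) 0) '' s) :=
  le_csSup ⟨M, by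
    rintro _ ⟨y, hy, rfl⟩
    exact max_le ((le_abs_self _).trans (hf y hy)) ((abs_nonneg _).trans (hf y hy))⟩
    (mem_image_of_mem _ hx)

theorem sSup_image_max_zero_nonneg {X : Type*} (s : Set X) (f : X → ℝ) :
    0 ≤ sSup ((fun y => max (f y) 0) '' s) :=
  Real.sSup_nonneg (by rintro _ ⟨y, -, rfl⟩; exact le_max_right _ _)

theorem exists_pos_le_and_mul_le {M ε K : ℝ} (hM : 0 < M) (hε : 0 < ε) (hK : 0 ≤ K) :
    ∃ ρ > 0, ρ ≤ M ∧ ρ * K ≤ ε := by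
  refine ⟨min M (ε / (K + 1)), lt_min hM (by positivity), min_le_left _ _, ?_⟩
  calc min M (ε / (K + 1)) * K ≤ ε / (K + 1) * K := by gcongr; exact min_le_right _ _
    _ ≤ ε := by rw [div_mul_eq_mul_div, div_le_iff₀ (by positivity)]; nlinarith

theorem sum_le_sum_comp_of_nonpos {ι κ N : Type*} [Fintype ι] [Fintype κ] [AddCommMonoid N]
    [Preorder N] [AddLeftMono N] {e : κ → ι} (he : Function.Injective e) {f : ι → N}
    (hf : ∀ i, f i ≤ 0) : ∑ i, f i ≤ ∑ j, f (e j) := by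
  classical
  rw [← Finset.sum_image fun x _ y _ hxy => he hxy]
  exact Finset.sum_le_sum_of_subset_of_nonpos' (Finset.subset_univ _) fun i _ _ => hf i

theorem DeltaOp_const_mul (d : ℕ) (h θ : ℝ) (l : Fin d → ℝ) (φ : (Fin d → ℝ) → ℝ)
    (x : Fin d → ℝ) : DeltaOp d h l (fun y => θ * φ y) x = θ * DeltaOp d h l φ x := by
  simp only [DeltaOp]; ring

theorem deltaOp_const_mul (d : ℕ) (h θ : ℝ) (l : Fin d → ℝ) (φ : (Fin d → ℝ) → ℝ)
    (x : Fin d → ℝ) : deltaOp d h l (fun y => θ * φ y) x = θ * deltaOp d h l φ x := by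
  simp only [deltaOp]; ring

theorem sum_DeltaOp_add_sum_deltaOp_le {m d : ℕ} (hdm : d ≤ m) (L : Fin m → Fin d → ℝ)
    {h A B δ : ℝ} (hh : 0 < h) (hδ : 0 ≤ δ) {a : Fin m → ℝ} {b : Fin d → ℝ}
    (ha : ∀ k, 0 ≤ a k ∧ a k ≤ A) (hb : ∀ j, b j ≤ B)
    (hab : ∀ j, h * max (-b j) 0 ≤ a (Fin.castLE hdm j)) {u : (Fin d → ℝ) → ℝ}
    {x : Fin d → ℝ} (hu : ∀ k, u (x + h • L k) ≤ u x + δ ∧ u (x - h • L k) ≤ u x + δ) :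
    ∑ k, a k * DeltaOp d h (L k) u x + ∑ j, b j * deltaOp d h (L (Fin.castLE hdm j)) u x ≤
      δ * (2 * m * A / h ^ 2 + d * B / h) := by
  set P : Fin m → ℝ := fun k => u (x + h • L k) - u x - δ
  set N : Fin m → ℝ := fun k => u (x - h • L k) - u x - δ
  have hP : ∀ k, P k ≤ 0 := fun k => by simp only [P]; linarith [(hu k).1]
  have hN : ∀ k, N k ≤ 0 := fun k => by simp only [N]; linarith [(hu k).2]
  have hexpand : h ^ 2 * (∑ k, a k * DeltaOp d h (L k) u x +
        ∑ j, b j * deltaOp d h (L (Fin.castLE hdm j)) u x) =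
      ∑ k, (a k * N k + a k * P k + 2 * δ * a k) +
        ∑ j, (h * b j * P (Fin.castLE hdm j) + h * δ * b j) := by
    rw [mul_add, Finset.mul_sum, Finset.mul_sum]
    congr 1 <;> refine Finset.sum_congr rfl fun k _ => ?_ <;>
      simp only [DeltaOp, deltaOp, P, N] <;> field_simp <;> ring
  simp only [Finset.sum_add_distrib, ← Finset.mul_sum] at hexpand
  -- upwind: the forward difference in direction `e_j` carries the weight `a_j + h b_j ≥ 0`
  have hdrift : ∑ j, a (Fin.castLE hdm j) * P (Fin.castLE hdm j) +
      ∑ j, h * b j * P (Fin.castLE hdm j) ≤ 0 := by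
    rw [← Finset.sum_add_distrib]
    refine Finset.sum_nonpos fun j _ => ?_
    rw [← add_mul]
    exact mul_nonpos_of_nonneg_of_nonpos
      (by linarith [hab j, mul_le_mul_of_nonneg_left (le_max_left (-b j) 0) hh.le]) (hP _)
  have hdrop := sum_le_sum_comp_of_nonpos (Fin.castLE_injective hdm)
    (f := fun k => a k * P k) fun k => mul_nonpos_of_nonneg_of_nonpos (ha k).1 (hP k)
  have hsumN : ∑ k, a k * N k ≤ 0 :=
    Finset.sum_nonpos fun k _ => mul_nonpos_of_nonneg_of_nonpos (ha k).1 (hN k)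
  have hsuma : ∑ k, a k ≤ m * A := by
    simpa using Finset.sum_le_sum fun k (_ : k ∈ Finset.univ) => (ha k).2
  have hsumb : ∑ j, b j ≤ d * B := by
    simpa using Finset.sum_le_sum fun j (_ : j ∈ Finset.univ) => hb j
  have hbound : h ^ 2 * (δ * (2 * m * A / h ^ 2 + d * B / h)) =
      2 * δ * (m * A) + h * δ * (d * B) := by
    field_simp
  rw [← mul_le_mul_iff_of_pos_left (pow_pos hh 2), hexpand, hbound]
  nlinarith [mul_le_mul_of_nonneg_left hsuma (by positivity : (0:ℝ) ≤ 2 * δ),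
    mul_le_mul_of_nonneg_left hsumb (by positivity : (0:ℝ) ≤ h * δ)]

theorem neg_le_deriv_excess_of_near_max {m d : ℕ} (hdm : d ≤ m) (L : Fin m → Fin d → ℝ)
    {A B h cbar Sη ε ρ θ c η : ℝ} (hh : 0 < h) (hρ : 0 ≤ ρ)
    (hρK : ρ * (2 * m * A / h ^ 2 + d * B / h) ≤ ε) {a : Fin m → ℝ} {b : Fin d → ℝ}
    (ha : ∀ k, 0 ≤ a k ∧ a k ≤ A) (hb : ∀ j, b j ≤ B)
    (hab : ∀ j, h * max (-b j) 0 ≤ a (Fin.castLE hdm j)) (hc : -c ≤ cbar)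
    (hθ0 : 0 ≤ θ) (hθ1 : θ ≤ 1) (hη : max η 0 ≤ Sη) {w : (Fin d → ℝ) → ℝ} {x : Fin d → ℝ}
    (hw : 0 ≤ θ * w x)
    (hnbr : ∀ k, θ * w (x + h • L k) ≤ θ * w x + ρ ∧ θ * w (x - h • L k) ≤ θ * w x + ρ) :
    -(Sη + ε) ≤ cbar * θ * w x - θ * ((∑ k, a k * DeltaOp d h (L k) w x) +
      (∑ j, b j * deltaOp d h (L (Fin.castLE hdm j)) w x) - c * w x + η) := by
  have hspatial := sum_DeltaOp_add_sum_deltaOp_le hdm L hh hρ ha hb hab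
    (u := fun y => θ * w y) hnbr
  simp only [DeltaOp_const_mul, deltaOp_const_mul, mul_left_comm _ θ, ← Finset.mul_sum,
    ← mul_add] at hspatial
  have hη' : θ * η ≤ Sη := (mul_le_max_zero hθ0 hθ1).trans hη
  have hcw : 0 ≤ (c + cbar) * (θ * w x) := mul_nonneg (by linarith) hw
  nlinarith

theorem nonpos_of_growth_near_sSup {X : Type*} {Qo QQ : Set (ℝ × X)} {U : ℝ → X → ℝ} {T : ℝ}
    (hQo : Qo ⊆ QQ) (hbdd : BddAbove ((fun p => U p.1 p.2) '' QQ))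
    (hopen : ∀ x, IsOpen {t | (t, x) ∈ Qo}) (hT : ∀ p ∈ Qo, p.1 < T)
    (hcont : ∀ x, ContinuousOn (fun t => U t x) {t | (t, x) ∈ Qo})
    (hbdry : ∀ p ∈ QQ, p ∉ Qo → U p.1 p.2 ≤ 0)
    (hexit : ∀ x t₁ β μ, t₁ < β → Ico t₁ β ⊆ {t | (t, x) ∈ Qo} → (β, x) ∉ Qo →
      (∀ r ∈ Ico t₁ β, μ ≤ U r x) → (β, x) ∈ QQ ∧ μ ≤ U β x)
    (hgrowth : ∀ M, 0 < M → (∀ p ∈ QQ, U p.1 p.2 ≤ M) → ∃ μ < M, ∀ x s t, s ≤ t →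
      Icc s t ⊆ {t | (t, x) ∈ Qo} → (∀ r ∈ Icc s t, μ < U r x) → U s x ≤ U t x) :
    ∀ p ∈ Qo, U p.1 p.2 ≤ 0 := by
  intro p hp
  by_contra! hpos
  set M := sSup ((fun p => U p.1 p.2) '' QQ)
  have hUM : ∀ q ∈ QQ, U q.1 q.2 ≤ M := fun q hq => le_csSup hbdd (mem_image_of_mem _ hq)
  have hM : 0 < M := hpos.trans_le (hUM p (hQo hp))
  obtain ⟨μ, hμM, hgrow⟩ := hgrowth M hM hUM
  obtain ⟨μ', hμ'₁, hμ'₂⟩ := exists_between (max_lt hμM hM)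
  obtain ⟨_, ⟨⟨t₁, x⟩, hq, rfl⟩, hlt⟩ :=
    exists_lt_of_lt_csSup ⟨_, mem_image_of_mem _ (hQo hp)⟩ hμ'₂
  have hq' : (t₁, x) ∈ Qo := by
    by_contra hn
    linarith [hbdry _ hq hn, le_max_right μ 0]
  obtain ⟨β, ⟨ht₁β, -⟩, hβ, hsub⟩ := exists_exit_of_isOpen (hopen x) hq'
    (fun hT' => lt_irrefl T (hT _ hT')) (hT _ hq').le
  have hprop := le_of_growth_above ((hcont x).mono hsub) ((le_max_left μ 0).trans_lt hμ'₁)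
    hlt.le fun s t hs hst htβ hnear =>
      hgrow x s t hst (fun r hr => hsub ⟨hs.trans hr.1, hr.2.trans_lt htβ⟩) hnear
  obtain ⟨hβQQ, hβU⟩ := hexit x t₁ β μ' ht₁β hsub hβ hprop
  linarith [hbdry _ hβQQ hβ, le_max_right μ 0]

-- The weight `e^{c̄(r−T)}` absorbs the zeroth-order term `−c v`, the slope `κ > sup η⁺` of the
-- affine part absorbs the source `η`.
def excess {X : Type*} (cbar T S κ : ℝ) (v : ℝ → X → ℝ) (r : ℝ) (x : X) : ℝ :=
  Real.exp (cbar * (r - T)) * v r x - (S + (T - r) * κ)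

theorem excess_le_max_zero {X : Type*} {cbar T S κ r : ℝ} {v : ℝ → X → ℝ} {x : X}
    (hr : r ≤ T) (hcbar : 0 ≤ cbar) (hκ : 0 ≤ κ) :
    excess cbar T S κ v r x ≤ max (v r x) 0 - S := by
  have := mul_le_max_zero (w := v r x) (Real.exp_pos (cbar * (r - T))).le
    (Real.exp_le_one_iff.2 (mul_nonpos_of_nonneg_of_nonpos hcbar (by linarith)))
  have := mul_nonneg (sub_nonneg.2 hr) hκ
  unfold excess
  linarith

theorem le_excess_iff {X : Type*} {cbar T S κ r μ : ℝ} {v : ℝ → X → ℝ} {x : X} :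
    μ ≤ excess cbar T S κ v r x ↔ (μ + (S + (T - r) * κ)) / Real.exp (cbar * (r - T)) ≤ v r x := by
  rw [div_le_iff₀' (Real.exp_pos _), excess]
  constructor <;> intro <;> linarith

-- The set `Q̂^o` of the statement.
def leftLimitPoints {d : ℕ} (T h : ℝ) (Qo : Set (ℝ × (Fin d → ℝ))) : Set (ℝ × (Fin d → ℝ)) :=
  {p | p.1 ∈ Ioc 0 T ∧ (∃ z : Fin d → ℤ, p.2 = fun i => h * (z i : ℝ)) ∧
    ∃ u : ℕ → ℝ, StrictMono u ∧ (∀ n, u n < p.1 ∧ (u n, p.2) ∈ Qo) ∧ Tendsto u atTop (𝓝 p.1)}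

theorem mem_leftLimitPoints {d : ℕ} {T h t w : ℝ} {Qo : Set (ℝ × (Fin d → ℝ))} {x : Fin d → ℝ}
    (ht : t ∈ Ioc 0 T) (hx : ∃ z : Fin d → ℤ, x = fun i => h * (z i : ℝ)) (hw : w < t)
    (hsub : Ioo w t ⊆ {r | (r, x) ∈ Qo}) : (t, x) ∈ leftLimitPoints T h Qo := by
  obtain ⟨u, hu, hmem, hlim⟩ := exists_seq_strictMono_tendsto' hw
  exact ⟨ht, hx, u, hu, fun n => ⟨(hmem n).2, hsub (hmem n)⟩, hlim⟩

theorem subset_leftLimitPoints {d : ℕ} {T h : ℝ} {Qo : Set (ℝ × (Fin d → ℝ))}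
    (hQo : ∀ p ∈ Qo, p.1 ∈ Ioo 0 T ∧ ∃ z : Fin d → ℤ, p.2 = fun i => h * (z i : ℝ))
    (hsec : ∀ x, IsOpen {t | (t, x) ∈ Qo}) : Qo ⊆ leftLimitPoints T h Qo := fun p hp => by
  obtain ⟨w, hw, hsub⟩ :=
    exists_Ioc_subset_of_mem_nhds ((hsec p.2).mem_nhds hp) ⟨p.1 - 1, by linarith⟩
  exact mem_leftLimitPoints ⟨(hQo p hp).1.1, (hQo p hp).1.2.le⟩ (hQo p hp).2 hw
    (Ioo_subset_Ioc_self.trans hsub)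

theorem mem_leftLimitPoints_and_le_excess_of_exit {d : ℕ} {T h cbar S κ : ℝ}
    {Qo : Set (ℝ × (Fin d → ℝ))} {v : ℝ → (Fin d → ℝ) → ℝ}
    (hQo : ∀ p ∈ Qo, p.1 ∈ Ioo 0 T ∧ ∃ z : Fin d → ℤ, p.2 = fun i => h * (z i : ℝ))
    (hv : ∃ Mv, ∀ p ∈ Qo, v p.1 p.2 ≤ Mv)
    (hlimsup : ∀ p ∈ leftLimitPoints T h Qo \ Qo, v p.1 p.2 =
      limsup (fun s => v s p.2) (𝓝[<] p.1 ⊓ 𝓟 {s | (s, p.2) ∈ Qo}))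
    {x : Fin d → ℝ} {t₁ β μ : ℝ} (ht₁β : t₁ < β) (hsub : Ico t₁ β ⊆ {t | (t, x) ∈ Qo})
    (hβ : (β, x) ∉ Qo) (hμ : ∀ r ∈ Ico t₁ β, μ ≤ excess cbar T S κ v r x) :
    (β, x) ∈ leftLimitPoints T h Qo ∧ μ ≤ excess cbar T S κ v β x := by
  have hsub' : Ioo t₁ β ⊆ {t | (t, x) ∈ Qo} := Ioo_subset_Ico_self.trans hsub
  have ht₁ := hQo _ (hsub ⟨le_rfl, ht₁β⟩)
  have hβT : β ≤ T := by
    by_contra! hTβ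
    exact lt_irrefl T (hQo _ (hsub ⟨ht₁.1.2.le, hTβ⟩)).1.2
  have hmem : (β, x) ∈ leftLimitPoints T h Qo :=
    mem_leftLimitPoints ⟨ht₁.1.1.trans ht₁β, hβT⟩ ht₁.2 ht₁β hsub'
  refine ⟨hmem, ?_⟩
  have hL : 𝓝[<] β ⊓ 𝓟 {s | (s, x) ∈ Qo} = 𝓝[<] β :=
    inf_eq_left.2 (le_principal_iff.2 (mem_of_superset (Ioo_mem_nhdsLT ht₁β) hsub'))
  have hlim := hlimsup _ ⟨hmem, hβ⟩
  dsimp only at hlim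
  rw [hL] at hlim
  obtain ⟨Mv, hMv⟩ := hv
  rw [le_excess_iff, hlim]
  refine le_limsup_of_tendsto_of_eventually_le
    (g := fun r => (μ + (S + (T - r) * κ)) / Real.exp (cbar * (r - T))) ?_ ?_
    (isBoundedUnder_of_eventually_le (a := Mv) ?_)
  · exact ((Continuous.div (by fun_prop) (by fun_prop) fun r => (Real.exp_pos _).ne').tendsto
      β).mono_left nhdsWithin_le_nhds
  · filter_upwards [Ioo_mem_nhdsLT ht₁β] with r hr
    exact le_excess_iff.1 (hμ r (Ioo_subset_Ico_self hr))
  · filter_upwards [Ioo_mem_nhdsLT ht₁β] with r hr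
    exact hMv _ (hsub' hr)

theorem excess_nondecreasing_near_bound {m d : ℕ} (hdm : d ≤ m) (L : Fin m → Fin d → ℝ)
    {A B h T cbar Sv Sη ε : ℝ} (hA : 0 ≤ A) (hB : 0 ≤ B) (hh : 0 < h) (hSv : 0 ≤ Sv)
    (hε : 0 < ε) {a : Fin m → ℝ → (Fin d → ℝ) → ℝ} {b : Fin d → ℝ → (Fin d → ℝ) → ℝ}
    {c η v : ℝ → (Fin d → ℝ) → ℝ} (ha : ∀ k t x, 0 ≤ a k t x ∧ a k t x ≤ A)
    (hb : ∀ k t x, |b k t x| ≤ B)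
    (hab : ∀ k t x, h * max (-(b k t x)) 0 ≤ a (Fin.castLE hdm k) t x)
    (hcbar : ∀ t x, max (-(c t x)) 0 ≤ cbar) {Qo QQ : Set (ℝ × (Fin d → ℝ))}
    (hsymm : ∀ k, ∃ k', L k' = -L k) (hnbr : ∀ p ∈ Qo, ∀ k, (p.1, p.2 + h • L k) ∈ QQ)
    (hT : ∀ p ∈ Qo, p.1 ≤ T) (hη : ∀ p ∈ Qo, max (η p.1 p.2) 0 ≤ Sη)
    (hvcont : ∀ x, ContinuousOn (fun t => v t x) {t | (t, x) ∈ Qo})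
    (hv : ∀ x s t, s ≤ t → Icc s t ⊆ {r | (r, x) ∈ Qo} →
      v t x - v s x = -∫ r in s..t,
        ((∑ k, a k r x * DeltaOp d h (L k) (fun y => v r y) x) +
          (∑ k, b k r x * deltaOp d h (L (Fin.castLE hdm k)) (fun y => v r y) x) -
          c r x * v r x + η r x))
    (M : ℝ) (hM : 0 < M) (hUM : ∀ p ∈ QQ, excess cbar T Sv (Sη + ε) v p.1 p.2 ≤ M) :
    ∃ μ < M, ∀ x s t, s ≤ t → Icc s t ⊆ {r | (r, x) ∈ Qo} →
      (∀ r ∈ Icc s t, μ < excess cbar T Sv (Sη + ε) v r x) →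
      excess cbar T Sv (Sη + ε) v s x ≤ excess cbar T Sv (Sη + ε) v t x := by
  -- near the bound `M` the spatial part of the operator is at most `ρ (2mA/h² + dB/h) ≤ ε`
  obtain ⟨ρ, hρ, hρM, hρK⟩ := exists_pos_le_and_mul_le hM hε
    (by positivity : 0 ≤ 2 * m * A / h ^ 2 + d * B / h)
  refine ⟨M - ρ, by linarith, fun x s t hst hsub hnear => ?_⟩
  have hcbar0 : 0 ≤ cbar := (le_max_right _ _).trans (hcbar 0 0)
  have hSη : 0 ≤ Sη := (le_max_right _ _).trans (hη _ (hsub ⟨le_rfl, hst⟩))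
  set θ : ℝ → ℝ := fun r => Real.exp (cbar * (r - T))
  set φ : ℝ → ℝ := fun r => Sv + (T - r) * (Sη + ε)
  set F : ℝ → ℝ := fun r =>
    (∑ k, a k r x * DeltaOp d h (L k) (fun y => v r y) x) +
      (∑ k, b k r x * deltaOp d h (L (Fin.castLE hdm k)) (fun y => v r y) x) -
      c r x * v r x + η r x
  have hθ : ∀ r, HasDerivAt θ (cbar * θ r) r := fun r => by
    convert (((hasDerivAt_id' r).sub_const T).const_mul cbar).exp using 1
    simp only [θ]; ring
  have hφ : ∀ r, HasDerivAt φ (-1 * (Sη + ε)) r := fun r =>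
    (((hasDerivAt_id r).const_sub T).mul_const (Sη + ε)).const_add Sv
  have hθv : ∀ r ∈ Icc s t, 0 ≤ θ r * v r x := fun r hr => by
    have hnear' : M - ρ < θ r * v r x - φ r := hnear r hr
    nlinarith [mul_nonneg (sub_nonneg.2 (hT _ (hsub hr))) (add_pos_of_nonneg_of_pos hSη hε).le]
  have hkey : ∀ r ∈ Icc s t, deriv φ r ≤ deriv θ r * v r x - θ r * F r := by
    intro r hr
    have hr' : (r, x) ∈ Qo := hsub hr
    have hnear' : M - ρ < θ r * v r x - φ r := hnear r hr
    have hθ1 : θ r ≤ 1 :=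
      Real.exp_le_one_iff.2 (mul_nonpos_of_nonneg_of_nonpos hcbar0 (by linarith [hT _ hr']))
    have := neg_le_deriv_excess_of_near_max hdm L hh hρ.le hρK (fun k => ha k r x)
      (fun j => (le_abs_self _).trans (hb j r x)) (fun j => hab j r x)
      ((le_max_left _ _).trans (hcbar r x)) (Real.exp_pos _).le hθ1 (hη _ hr') (hθv r hr)
      (w := fun y => v r y) fun k => by
        obtain ⟨k', hk'⟩ := hsymm k
        have hplus : excess cbar T Sv (Sη + ε) v r (x + h • L k) ≤ M := hUM _ (hnbr _ hr' k)
        have hminus : excess cbar T Sv (Sη + ε) v r (x - h • L k) ≤ M := by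
          rw [sub_eq_add_neg, ← smul_neg, ← hk']
          exact hUM _ (hnbr _ hr' k')
        unfold excess at hplus hminus
        constructor <;> linarith
    rw [(hφ r).deriv, (hθ r).deriv]
    simp only [F]
    linarith
  have hvs : 0 ≤ v s x := nonneg_of_mul_nonneg_right (hθv s ⟨le_rfl, hst⟩) (Real.exp_pos _)
  refine mul_sub_le_mul_sub_of_deriv_le (θ := θ) (φ := φ) (V := fun r => v r x) (F := F) hst
    (by fun_prop) (by fun_prop) (Real.exp_le_exp.2 (by nlinarith)) (by simp only [φ]; nlinarith)
    ((hvcont x).mono hsub) (fun r hr => ?_) hvs hkey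
  linarith [hv x s r hr.1 ((Icc_subset_Icc_right hr.2).trans hsub)]

theorem le_of_forall_pos_le_exp_mul {T t₀ cbar Sη Sv w : ℝ} (ht₀ : t₀ ∈ Ioo 0 T)
    (hcbar : 0 ≤ cbar) (hSη : 0 ≤ Sη) (hSv : 0 ≤ Sv)
    (h : ∀ ε > 0, Real.exp (cbar * (t₀ - T)) * w ≤ Sv + (T - t₀) * (Sη + ε)) :
    w ≤ T * Real.exp (cbar * T) * Sη + Real.exp (cbar * T) * Sv := by
  have hT : 0 < T := ht₀.1.trans ht₀.2
  have hw : Real.exp (cbar * (t₀ - T)) * w ≤ Sv + (T - t₀) * Sη :=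
    le_of_forall_pos_le_add fun δ hδ => by
      have hδT : T * (δ / T) = δ := mul_div_cancel₀ δ hT.ne'
      nlinarith [h (δ / T) (div_pos hδ hT), div_pos hδ hT, ht₀.1]
  have hexp : Real.exp (cbar * (T - t₀)) * Real.exp (cbar * (t₀ - T)) = 1 := by
    rw [← Real.exp_add]; ring_nf; exact Real.exp_zero
  have hS : 0 ≤ Sv + (T - t₀) * Sη := add_nonneg hSv (mul_nonneg (by linarith [ht₀.2]) hSη)
  calc w = Real.exp (cbar * (T - t₀)) * (Real.exp (cbar * (t₀ - T)) * w) := by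
        rw [← mul_assoc, hexp, one_mul]
    _ ≤ Real.exp (cbar * (T - t₀)) * (Sv + (T - t₀) * Sη) := by gcongr
    _ ≤ Real.exp (cbar * T) * (Sv + T * Sη) := by
        gcongr
        · linarith [ht₀.1]
        · linarith [ht₀.1]
    _ = T * Real.exp (cbar * T) * Sη + Real.exp (cbar * T) * Sv := by ring

theorem lattice_maximum_principle_general
    (d m : ℕ) (hdm : d ≤ m)
    (l : Fin m → Fin d → ℤ)
    (hsymm : ∀ k : Fin m, ∃ k' : Fin m, l k' = -l k)
    (A B C₀ : ℝ) (hA : 0 ≤ A) (hB : 0 ≤ B) :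
    ∃ h₀ : ℝ, 0 < h₀ ∧
    ∀ (T : ℝ), 0 < T →
    ∀ (a : Fin m → ℝ → (Fin d → ℝ) → ℝ) (b : Fin d → ℝ → (Fin d → ℝ) → ℝ)
      (c : ℝ → (Fin d → ℝ) → ℝ),
      (∀ (k : Fin m) (t : ℝ) (x : Fin d → ℝ), 0 ≤ a k t x ∧ a k t x ≤ A) →
      (∀ (k : Fin d) (t : ℝ) (x : Fin d → ℝ), |b k t x| ≤ B) →
      (∀ (t : ℝ) (x : Fin d → ℝ), |c t x| ≤ C₀) →
    ∀ (h : ℝ), h ∈ Set.Ioc 0 h₀ →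
      -- the condition `h·(−b_k)⁺ ≤ a_k`, `k = 1,…,d`
      (∀ (k : Fin d) (t : ℝ) (x : Fin d → ℝ),
        h * max (-(b k t x)) 0 ≤ a (Fin.castLE hdm k) t x) →
    ∀ (Qo Qhat QQ : Set (ℝ × (Fin d → ℝ))),
      -- `Q^o ⊆ (0,T) × hℤ^d`
      (∀ p ∈ Qo, p.1 ∈ Set.Ioo 0 T ∧ ∃ z : Fin d → ℤ, p.2 = fun i => h * (z i : ℝ)) →
      -- the sections of `Q^o` are open
      (∀ x : Fin d → ℝ, IsOpen {t : ℝ | (t, x) ∈ Qo}) →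
      -- `Q̂^o`: points of `(0,T] × hℤ^d` approached from the left within `Q^o`
      Qhat = {p : ℝ × (Fin d → ℝ) | p.1 ∈ Set.Ioc 0 T ∧
        (∃ z : Fin d → ℤ, p.2 = fun i => h * (z i : ℝ)) ∧
        ∃ u : ℕ → ℝ, StrictMono u ∧ (∀ n, u n < p.1 ∧ (u n, p.2) ∈ Qo) ∧
          Filter.Tendsto u Filter.atTop (nhds p.1)} →
      -- `Q = Q̂^o ∪ {(t, x + h l_k) : (t,x) ∈ Q^o}`
      QQ = Qhat ∪ {p : ℝ × (Fin d → ℝ) |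
        ∃ q ∈ Qo, ∃ k : Fin m, p = (q.1, q.2 + h • fun i => ((l k i : ℝ)))} →
    ∀ (η v : ℝ → (Fin d → ℝ) → ℝ) (cbar : ℝ),
      (∀ (t : ℝ) (x : Fin d → ℝ), max (-(c t x)) 0 ≤ cbar) →
      -- `η` is bounded on `Q^o`
      (∃ Me : ℝ, ∀ p ∈ Qo, |η p.1 p.2| ≤ Me) →
      -- `v` is bounded on `Q`
      (∃ Mv : ℝ, ∀ p ∈ QQ, |v p.1 p.2| ≤ Mv) →
      -- `v(·,x)` is Borel measurable on `Q_{|x}`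
      (∀ x : Fin d → ℝ, Measurable (({t : ℝ | (t, x) ∈ QQ}).restrict (fun t => v t x))) →
      -- `v(·,x)` is continuous on `Q^o_{|x}`
      (∀ x : Fin d → ℝ, ContinuousOn (fun t => v t x) {t : ℝ | (t, x) ∈ Qo}) →
      -- the integral form of `∂_t v + Lv = −η` on the sections of `Q^o`
      (∀ (x : Fin d → ℝ) (s t : ℝ), s ≤ t → Set.Icc s t ⊆ {r : ℝ | (r, x) ∈ Qo} →
        v t x - v s x = -∫ r in s..t,
          ((∑ k : Fin m, a k r x * DeltaOp d h (fun i => ((l k i : ℝ))) (fun y => v r y) x) +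
            (∑ k : Fin d, b k r x *
              deltaOp d h (fun i => ((l (Fin.castLE hdm k) i : ℝ))) (fun y => v r y) x) -
            c r x * v r x + η r x)) →
      -- the redefinition of `v` on `Q̂^o ∖ Q^o` as a left `limsup` over `Q^o`
      (∀ p ∈ Qhat \ Qo, v p.1 p.2 =
        Filter.limsup (fun s => v s p.2)
          ((nhdsWithin p.1 (Set.Iio p.1)) ⊓ Filter.principal {s : ℝ | (s, p.2) ∈ Qo})) →
    ∀ p ∈ Qo, v p.1 p.2 ≤
      T * Real.exp (cbar * T) * sSup ((fun q : ℝ × (Fin d → ℝ) => max (η q.1 q.2) 0) '' Qo) +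
        Real.exp (cbar * T) * sSup ((fun q : ℝ × (Fin d → ℝ) => max (v q.1 q.2) 0) '' (QQ \ Qo)) := by
  refine ⟨1, one_pos, fun T _ a b c ha hb _ h hh hab Qo Qhat QQ hQo hsec hQhat hQQ η v cbar hcbar
    ⟨Me, hMe⟩ ⟨Mv, hMv⟩ _ hvcont hv hlimsup => ?_⟩
  subst hQhat
  have hQhatQQ : leftLimitPoints T h Qo ⊆ QQ := by rw [hQQ]; exact subset_union_left
  have hQoQQ : Qo ⊆ QQ := (subset_leftLimitPoints hQo hsec).trans hQhatQQ
  have hQQT : ∀ q ∈ QQ, q.1 ≤ T := by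
    rw [hQQ]
    rintro q (hq | ⟨q', hq', k, rfl⟩)
    exacts [hq.1.2, (hQo q' hq').1.2.le]
  have hcbar0 : 0 ≤ cbar := (le_max_right _ _).trans (hcbar 0 0)
  set Sη := sSup ((fun q : ℝ × (Fin d → ℝ) => max (η q.1 q.2) 0) '' Qo)
  set Sv := sSup ((fun q : ℝ × (Fin d → ℝ) => max (v q.1 q.2) 0) '' (QQ \ Qo))
  have hSη : ∀ q ∈ Qo, max (η q.1 q.2) 0 ≤ Sη := fun q hq =>
    le_sSup_image_max_zero (f := fun q : ℝ × (Fin d → ℝ) => η q.1 q.2) hMe hq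
  have hSv : ∀ q ∈ QQ \ Qo, max (v q.1 q.2) 0 ≤ Sv := fun q hq =>
    le_sSup_image_max_zero (f := fun q : ℝ × (Fin d → ℝ) => v q.1 q.2) (fun q hq => hMv q hq.1) hq
  have hSη0 : 0 ≤ Sη := sSup_image_max_zero_nonneg _ _
  have hSv0 : 0 ≤ Sv := sSup_image_max_zero_nonneg _ _
  intro p hp
  refine le_of_forall_pos_le_exp_mul (hQo p hp).1 hcbar0 hSη0 hSv0 fun ε hε => ?_
  have hexcess : ∀ q ∈ QQ, excess cbar T Sv (Sη + ε) v q.1 q.2 ≤ max (v q.1 q.2) 0 - Sv :=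
    fun q hq => excess_le_max_zero (hQQT q hq) hcbar0 (by positivity)
  have := nonpos_of_growth_near_sSup (U := excess cbar T Sv (Sη + ε) v) hQoQQ
    ⟨Mv, by
      rintro _ ⟨q, hq, rfl⟩
      linarith [hexcess q hq, (max_le (le_abs_self _) (abs_nonneg _)).trans (hMv q hq)]⟩
    hsec (fun q hq => (hQo q hq).1.2)
    (fun x => by have := hvcont x; unfold excess; fun_prop)
    (fun q hq hq' => by linarith [hexcess q hq, hSv q ⟨hq, hq'⟩])
    (fun x t₁ β μ ht₁β hsub hβ hμ =>
      (mem_leftLimitPoints_and_le_excess_of_exit hQo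
        ⟨Mv, fun q hq => (le_abs_self _).trans (hMv q (hQoQQ hq))⟩ hlimsup ht₁β hsub hβ
        hμ).imp_left (hQhatQQ ·))
    (excess_nondecreasing_near_bound hdm _ hA hB hh.1 hSv0 hε ha hb
      hab hcbar (fun k => (hsymm k).imp fun k' hk' => by ext i; simp [hk'])
      (fun q hq k => by rw [hQQ]; exact Or.inr ⟨q, hq, k, rfl⟩)
      (fun q hq => (hQo q hq).1.2.le) hSη hvcont hv) p hp
  unfold excess at this
  linarith

/-- Lemma 6.1 of Krylov, "An ersatz existence theorem for fully nonlinear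
parabolic equations without convexity assumptions": a maximum principle for
parabolic finite-difference operators on unbounded lattice domains. -/
theorem lattice_maximum_principle
    (d m : ℕ) (hd : 1 ≤ d) (hm : 1 ≤ m) (hdm : d ≤ m)
    (l : Fin m → Fin d → ℤ)
    (hbasis : ∀ i : Fin d, l (Fin.castLE hdm i) = fun j => if j = i then (1:ℤ) else 0)
    (hsymm : ∀ k : Fin m, ∃ k' : Fin m, l k' = -l k)
    (A B C₀ : ℝ) (hA : 0 ≤ A) (hB : 0 ≤ B) (hC₀ : 0 ≤ C₀) :
    ∃ h₀ : ℝ, 0 < h₀ ∧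
    ∀ (T : ℝ), 0 < T →
    ∀ (a : Fin m → ℝ → (Fin d → ℝ) → ℝ) (b : Fin d → ℝ → (Fin d → ℝ) → ℝ)
      (c : ℝ → (Fin d → ℝ) → ℝ),
      (∀ (k : Fin m) (t : ℝ) (x : Fin d → ℝ), 0 ≤ a k t x ∧ a k t x ≤ A) →
      (∀ (k : Fin d) (t : ℝ) (x : Fin d → ℝ), |b k t x| ≤ B) →
      (∀ (t : ℝ) (x : Fin d → ℝ), |c t x| ≤ C₀) →
    ∀ (h : ℝ), h ∈ Set.Ioc 0 h₀ →
      -- the condition `h·(−b_k)⁺ ≤ a_k`, `k = 1,…,d`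
      (∀ (k : Fin d) (t : ℝ) (x : Fin d → ℝ),
        h * max (-(b k t x)) 0 ≤ a (Fin.castLE hdm k) t x) →
    ∀ (Qo Qhat QQ : Set (ℝ × (Fin d → ℝ))),
      -- `Q^o ⊆ (0,T) × hℤ^d`
      (∀ p ∈ Qo, p.1 ∈ Set.Ioo 0 T ∧ ∃ z : Fin d → ℤ, p.2 = fun i => h * (z i : ℝ)) →
      -- the sections of `Q^o` are open
      (∀ x : Fin d → ℝ, IsOpen {t : ℝ | (t, x) ∈ Qo}) →
      -- `Q̂^o`: points of `(0,T] × hℤ^d` approached from the left within `Q^o`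
      Qhat = {p : ℝ × (Fin d → ℝ) | p.1 ∈ Set.Ioc 0 T ∧
        (∃ z : Fin d → ℤ, p.2 = fun i => h * (z i : ℝ)) ∧
        ∃ u : ℕ → ℝ, StrictMono u ∧ (∀ n, u n < p.1 ∧ (u n, p.2) ∈ Qo) ∧
          Filter.Tendsto u Filter.atTop (nhds p.1)} →
      -- `Q = Q̂^o ∪ {(t, x + h l_k) : (t,x) ∈ Q^o}`
      QQ = Qhat ∪ {p : ℝ × (Fin d → ℝ) |
        ∃ q ∈ Qo, ∃ k : Fin m, p = (q.1, q.2 + h • fun i => ((l k i : ℝ)))} →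
    ∀ (η v : ℝ → (Fin d → ℝ) → ℝ) (cbar : ℝ),
      (∀ (t : ℝ) (x : Fin d → ℝ), max (-(c t x)) 0 ≤ cbar) →
      -- `η` is bounded on `Q^o`
      (∃ Me : ℝ, ∀ p ∈ Qo, |η p.1 p.2| ≤ Me) →
      -- `v` is bounded on `Q`
      (∃ Mv : ℝ, ∀ p ∈ QQ, |v p.1 p.2| ≤ Mv) →
      -- `v(·,x)` is Borel measurable on `Q_{|x}`
      (∀ x : Fin d → ℝ, Measurable (({t : ℝ | (t, x) ∈ QQ}).restrict (fun t => v t x))) →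
      -- `v(·,x)` is continuous on `Q^o_{|x}`
      (∀ x : Fin d → ℝ, ContinuousOn (fun t => v t x) {t : ℝ | (t, x) ∈ Qo}) →
      -- the integral form of `∂_t v + Lv = −η` on the sections of `Q^o`
      (∀ (x : Fin d → ℝ) (s t : ℝ), s ≤ t → Set.Icc s t ⊆ {r : ℝ | (r, x) ∈ Qo} →
        v t x - v s x = -∫ r in s..t,
          ((∑ k : Fin m, a k r x * DeltaOp d h (fun i => ((l k i : ℝ))) (fun y => v r y) x) +
            (∑ k : Fin d, b k r x *
              deltaOp d h (fun i => ((l (Fin.castLE hdm k) i : ℝ))) (fun y => v r y) x) -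
            c r x * v r x + η r x)) →
      -- the redefinition of `v` on `Q̂^o ∖ Q^o` as a left `limsup` over `Q^o`
      (∀ p ∈ Qhat \ Qo, v p.1 p.2 =
        Filter.limsup (fun s => v s p.2)
          ((nhdsWithin p.1 (Set.Iio p.1)) ⊓ Filter.principal {s : ℝ | (s, p.2) ∈ Qo})) →
    ∀ p ∈ Qo, v p.1 p.2 ≤
      T * Real.exp (cbar * T) * sSup ((fun q : ℝ × (Fin d → ℝ) => max (η q.1 q.2) 0) '' Qo) +
        Real.exp (cbar * T) * sSup ((fun q : ℝ × (Fin d → ℝ) => max (v q.1 q.2) 0) '' (QQ \ Qo)) :=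
  lattice_maximum_principle_general d m hdm l hsymm A B C₀ hA hB
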